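/- arXiv:1904.10077 — 4 statements merged into one kernel-verified Lean document; each statement's English description precedes it below -/
import Mathlib

section
/- Let 0 ≤ ε12 ≤ ε1 < 1 and 0 ≤ ε12 ≤ ε2 < 1, and let α1, α2 ≥ 0 with α1 + α2 = 1. Suppose x, y > 0 satisfy the two capacity constraints of the two-user broadcast packet erasure channel with feedback: x/(1−ε1) + y/(1−ε12) ≤ 1 and x/(1−ε12) + y/(1−ε2) ≤ 1. Then (1/4)·(α1/x + α2/y) + 1/4 ≥ (1/4)·( (√(α1·(2−ε12−ε2)) + √(α2·(2−ε12−ε1)))² / ((1−ε12)·(2−ε1−ε2)) + 1 ). (This is the deterministic core of the lower bound on the expected weighted sum age of information achievable by any communication policy, where x and y are the long-run per-slot delivery rates to users 1 and 2.) -/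
/-!
Adding the two capacity constraints, after clearing denominators, gives the single linear constraint
`(2 - ε12 - ε2) x + (2 - ε12 - ε1) y ≤ (1 - ε12)(2 - ε1 - ε2)`.
Against it, Cauchy–Schwarz bounds `α1 / x + α2 / y` from below by
`(√(α1 (2 - ε12 - ε2)) + √(α2 (2 - ε12 - ε1)))² / ((1 - ε12)(2 - ε1 - ε2))`.
-/

open Real Finset

theorem add_mul_le_of_capacity {ε1 ε2 ε12 x y : ℝ} (h1 : ε1 < 1) (h2 : ε2 < 1) (h12 : ε12 < 1)
    (hcap1 : x / (1 - ε1) + y / (1 - ε12) ≤ 1) (hcap2 : x / (1 - ε12) + y / (1 - ε2) ≤ 1) :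
    (2 - ε12 - ε2) * x + (2 - ε12 - ε1) * y ≤ (1 - ε12) * (2 - ε1 - ε2) := by
  have hp1 : 0 < 1 - ε1 := by linarith
  have hp2 : 0 < 1 - ε2 := by linarith
  have hp12 : 0 < 1 - ε12 := by linarith
  rw [div_add_div _ _ hp1.ne' hp12.ne', div_le_one (by positivity)] at hcap1
  rw [div_add_div _ _ hp12.ne' hp2.ne', div_le_one (by positivity)] at hcap2
  linarith

theorem sq_sqrt_add_sqrt_le_mul {a b u v x y : ℝ} (ha : 0 ≤ a) (hb : 0 ≤ b) (hu : 0 ≤ u)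
    (hv : 0 ≤ v) (hx : 0 < x) (hy : 0 < y) :
    (√(a * u) + √(b * v)) ^ 2 ≤ (a / x + b / y) * (u * x + v * y) := by
  have hsq {c w z : ℝ} (hc : 0 ≤ c) (hw : 0 ≤ w) (hz : 0 < z) : √(c * w) ^ 2 = c / z * (w * z) := by
    rw [sq_sqrt (mul_nonneg hc hw)]
    field_simp
  simpa using sum_sq_le_sum_mul_sum_of_sq_le_mul univ
    (r := ![√(a * u), √(b * v)]) (f := ![a / x, b / y]) (g := ![u * x, v * y])
    (by simp only [mem_univ, forall_const, Fin.forall_fin_two]; constructor <;> simp <;> positivity)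
    (by simp only [mem_univ, forall_const, Fin.forall_fin_two]; constructor <;> simp <;> positivity)
    (by simp only [mem_univ, forall_const, Fin.forall_fin_two]
        exact ⟨(hsq ha hu hx).le, (hsq hb hv hy).le⟩)

theorem lower_bound_EWSAoI_general
    (ε1 ε2 ε12 α1 α2 x y : ℝ)
    (h121 : ε12 ≤ ε1) (h1 : ε1 < 1)
    (h2 : ε2 < 1)
    (hα1 : 0 ≤ α1) (hα2 : 0 ≤ α2)
    (hx : 0 < x) (hy : 0 < y)
    (hcap1 : x / (1 - ε1) + y / (1 - ε12) ≤ 1)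
    (hcap2 : x / (1 - ε12) + y / (1 - ε2) ≤ 1) :
    (1/4) * (α1 / x + α2 / y) + 1/4 ≥
      (1/4) * ((Real.sqrt (α1 * (2 - ε12 - ε2)) + Real.sqrt (α2 * (2 - ε12 - ε1)))^2
        / ((1 - ε12) * (2 - ε1 - ε2)) + 1) := by
  have h12 : ε12 < 1 := h121.trans_lt h1
  have hrate := add_mul_le_of_capacity h1 h2 h12 hcap1 hcap2
  have hcs := sq_sqrt_add_sqrt_le_mul (u := 2 - ε12 - ε2) (v := 2 - ε12 - ε1) hα1 hα2
    (by linarith) (by linarith) hx hy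
  have hbound : (√(α1 * (2 - ε12 - ε2)) + √(α2 * (2 - ε12 - ε1))) ^ 2
      / ((1 - ε12) * (2 - ε1 - ε2)) ≤ α1 / x + α2 / y := by
    rw [div_le_iff₀ (mul_pos (by linarith) (by linarith))]
    exact hcs.trans (mul_le_mul_of_nonneg_left hrate (by positivity))
  linarith

/-- Lower bound on the expected weighted sum age of information
(deterministic core): for any delivery rates (x, y) in the capacity region
of the two-user broadcast packet erasure channel with feedback. -/
theorem lower_bound_EWSAoI
    (ε1 ε2 ε12 α1 α2 x y : ℝ)
    (h12 : 0 ≤ ε12) (h121 : ε12 ≤ ε1) (h1 : ε1 < 1)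
    (h122 : ε12 ≤ ε2) (h2 : ε2 < 1)
    (hα1 : 0 ≤ α1) (hα2 : 0 ≤ α2) (hα : α1 + α2 = 1)
    (hx : 0 < x) (hy : 0 < y)
    (hcap1 : x / (1 - ε1) + y / (1 - ε12) ≤ 1)
    (hcap2 : x / (1 - ε12) + y / (1 - ε2) ≤ 1) :
    (1/4) * (α1 / x + α2 / y) + 1/4 ≥
      (1/4) * ((Real.sqrt (α1 * (2 - ε12 - ε2)) + Real.sqrt (α2 * (2 - ε12 - ε1)))^2
        / ((1 - ε12) * (2 - ε1 - ε2)) + 1) :=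
  lower_bound_EWSAoI_general ε1 ε2 ε12 α1 α2 x y h121 h1 h2 hα1 hα2 hx hy hcap1 hcap2
end

section
/- Let μ1, μ2, μ3 > 0 with μ1 + μ2 + μ3 = 1 and 0 ≤ ε12 < ε1 < 1, and set x = μ1·ε12 + μ2 + μ3, y = μ1·ε1 + μ2 + μ3·ε1, z = μ1·ε12 + μ2 + μ3·ε1, D = μ3·(1−ε1) − μ1·(ε1−ε12), δ = μ1·(1−ε12) + μ1²·(ε1−ε12)·(1−ε12)/D, β = −μ1·(ε1−ε12)·(1−ε1)·(μ1+μ3)/D, and assume D ≠ 0. Then for every integer ℓ ≥ 1 the following identity holds: x^{ℓ−1}·μ1·(1−ε1) + (Σ_{t=1}^{ℓ−1} x^{t−1}·y^{ℓ−1−t})·μ1·(ε1−ε12)·μ1·(1−ε1) + Σ_{d=2}^{ℓ} Σ_{t=1}^{ℓ−d} x^{t−1}·y^{ℓ−d−t}·(μ1·(ε1−ε12))²·z^{d−2}·μ3·(1−ε1) + Σ_{d=2}^{ℓ} x^{ℓ−d}·μ1·(ε1−ε12)·z^{d−2}·μ3·(1−ε1) = δ·x^{ℓ−1} + β·y^{ℓ−1}.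 (This gives the probability distribution P(I1 = ℓ) = δ·x^{ℓ−1} + β·y^{ℓ−1} of the inter-delivery time I1 of user 1 under the stationary randomized policy.) -/
/-!
Each sum in the formula telescopes once it is multiplied by a difference of two of `x, y, z`:
`(∑ t ∈ Icc 1 m, a^(t-1) b^(m-t)) (a - b) = a^m - b^m`. With `B = y - z`, `C = x - z` and
`D = x - y = C - B`, multiplying the whole left-hand side by `D` therefore turns it into a
polynomial identity in which the `z`-powers cancel because `D = C - B`; dividing by `D` gives
the coefficients `δ` and `β`.
-/

open Finset

theorem sum_Icc_pow_mul_pow_mul_sub {R : Type*} [CommRing R] (a b : R) (m : ℕ) :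
    (∑ t ∈ Icc 1 m, a ^ (t - 1) * b ^ (m - t)) * (a - b) = a ^ m - b ^ m := by
  rw [← Ico_add_one_right_eq_Icc, sum_Ico_eq_sum_range, Nat.add_sub_cancel, ← geom_sum₂_mul]
  refine congrArg (· * (a - b)) (sum_congr rfl fun i hi => ?_)
  rw [mem_range] at hi
  rw [show 1 + i - 1 = i by omega, show m - (1 + i) = m - 1 - i by omega]

theorem sum_Icc_two_eq_sum_Icc_one {M : Type*} [AddCommMonoid M] (f : ℕ → M) (ℓ : ℕ) :
    ∑ d ∈ Icc 2 ℓ, f d = ∑ s ∈ Icc 1 (ℓ - 1), f (s + 1) := by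
  cases ℓ with
  | zero => rfl
  | succ n => rw [Nat.add_sub_cancel, ← map_add_right_Icc 1 n 1, sum_map]; rfl

section

variable {R : Type*} [CommRing R]

theorem sub_mul_interdelivery_double_sum (B C x y z : R) (ℓ : ℕ) :
    (x - y) * ∑ d ∈ Icc 2 ℓ, ∑ t ∈ Icc 1 (ℓ - d),
        x ^ (t - 1) * y ^ (ℓ - d - t) * B ^ 2 * z ^ (d - 2) * C
      = B ^ 2 * C * ((∑ s ∈ Icc 1 (ℓ - 1), z ^ (s - 1) * x ^ (ℓ - 1 - s))
          - ∑ s ∈ Icc 1 (ℓ - 1), z ^ (s - 1) * y ^ (ℓ - 1 - s)) := by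
  rw [sum_Icc_two_eq_sum_Icc_one, mul_sum, ← sum_sub_distrib, mul_sum]
  refine sum_congr rfl fun s _ => ?_
  rw [show ℓ - (s + 1) = ℓ - 1 - s by omega, show s + 1 - 2 = s - 1 by omega, ← sum_mul,
    ← sum_mul, ← sum_mul]
  linear_combination (B ^ 2 * z ^ (s - 1) * C) * sum_Icc_pow_mul_pow_mul_sub x y (ℓ - 1 - s)

theorem interdelivery_tail_sum_eq (B C x z : R) (ℓ : ℕ) :
    ∑ d ∈ Icc 2 ℓ, x ^ (ℓ - d) * B * z ^ (d - 2) * C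
      = B * C * ∑ s ∈ Icc 1 (ℓ - 1), z ^ (s - 1) * x ^ (ℓ - 1 - s) := by
  rw [sum_Icc_two_eq_sum_Icc_one, mul_sum]
  refine sum_congr rfl fun s _ => ?_
  rw [show ℓ - (s + 1) = ℓ - 1 - s by omega, show s + 1 - 2 = s - 1 by omega]
  ring

theorem sub_mul_interdelivery_sum (A B C x y z : R) (hxz : x - z = C) (hyz : y - z = B)
    (ℓ : ℕ) :
    (x - y) * (x ^ (ℓ - 1) * A
      + (∑ t ∈ Icc 1 (ℓ - 1), x ^ (t - 1) * y ^ (ℓ - 1 - t)) * B * A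
      + (∑ d ∈ Icc 2 ℓ, ∑ t ∈ Icc 1 (ℓ - d),
          x ^ (t - 1) * y ^ (ℓ - d - t) * B ^ 2 * z ^ (d - 2) * C)
      + ∑ d ∈ Icc 2 ℓ, x ^ (ℓ - d) * B * z ^ (d - 2) * C)
    = ((x - y) * (A + B) + B * (A + B)) * x ^ (ℓ - 1) - B * (A + C) * y ^ (ℓ - 1) := by
  have hxy := sum_Icc_pow_mul_pow_mul_sub x y (ℓ - 1)
  have hzx := sum_Icc_pow_mul_pow_mul_sub z x (ℓ - 1)
  have hzy := sum_Icc_pow_mul_pow_mul_sub z y (ℓ - 1)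
  have hdouble := sub_mul_interdelivery_double_sum B C x y z ℓ
  rw [interdelivery_tail_sum_eq]
  subst hxz hyz
  linear_combination hdouble + (y - z) * A * hxy + (x - z) * (y - z) * (hzy - hzx)

end

theorem interdelivery_distribution_general
    (μ1 μ2 μ3 ε1 ε12 : ℝ)
    (x y z D δ β : ℝ)
    (hx : x = μ1 * ε12 + μ2 + μ3)
    (hy : y = μ1 * ε1 + μ2 + μ3 * ε1)
    (hz : z = μ1 * ε12 + μ2 + μ3 * ε1)
    (hD : D = μ3 * (1 - ε1) - μ1 * (ε1 - ε12))
    (hδ : δ = μ1 * (1 - ε12) + μ1^2 * (ε1 - ε12) * (1 - ε12) / D)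
    (hβ : β = -(μ1 * (ε1 - ε12) * (1 - ε1) * (μ1 + μ3)) / D)
    (hDne : D ≠ 0)
    (ℓ : ℕ) :
    x ^ (ℓ - 1) * (μ1 * (1 - ε1))
      + (∑ t ∈ Icc 1 (ℓ - 1), x ^ (t - 1) * y ^ (ℓ - 1 - t))
          * (μ1 * (ε1 - ε12)) * (μ1 * (1 - ε1))
      + (∑ d ∈ Icc 2 ℓ, ∑ t ∈ Icc 1 (ℓ - d),
          x ^ (t - 1) * y ^ (ℓ - d - t) * (μ1 * (ε1 - ε12))^2
            * z ^ (d - 2) * (μ3 * (1 - ε1)))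
      + (∑ d ∈ Icc 2 ℓ,
          x ^ (ℓ - d) * (μ1 * (ε1 - ε12)) * z ^ (d - 2) * (μ3 * (1 - ε1)))
      = δ * x ^ (ℓ - 1) + β * y ^ (ℓ - 1) := by
  have hxy : x - y = D := by rw [hx, hy, hD]; ring
  have key := sub_mul_interdelivery_sum (μ1 * (1 - ε1)) (μ1 * (ε1 - ε12)) (μ3 * (1 - ε1)) x y z
    (by rw [hx, hz]; ring) (by rw [hy, hz]; ring) ℓ
  rw [hxy] at key
  apply mul_left_cancel₀ hDne
  rw [key, hδ, hβ]
  field_simp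
  ring

/-- Distribution of the inter-delivery time of user 1 under a stationary
randomized policy: the case-by-case probability sum equals δ·x^(ℓ-1) + β·y^(ℓ-1). -/
theorem interdelivery_distribution
    (μ1 μ2 μ3 ε1 ε12 : ℝ)
    (hμ1 : 0 < μ1) (hμ2 : 0 < μ2) (hμ3 : 0 < μ3) (hμ : μ1 + μ2 + μ3 = 1)
    (h12 : 0 ≤ ε12) (h121 : ε12 < ε1) (h1 : ε1 < 1)
    (x y z D δ β : ℝ)
    (hx : x = μ1 * ε12 + μ2 + μ3)
    (hy : y = μ1 * ε1 + μ2 + μ3 * ε1)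
    (hz : z = μ1 * ε12 + μ2 + μ3 * ε1)
    (hD : D = μ3 * (1 - ε1) - μ1 * (ε1 - ε12))
    (hδ : δ = μ1 * (1 - ε12) + μ1^2 * (ε1 - ε12) * (1 - ε12) / D)
    (hβ : β = -(μ1 * (ε1 - ε12) * (1 - ε1) * (μ1 + μ3)) / D)
    (hDne : D ≠ 0)
    (ℓ : ℕ) (hℓ : 1 ≤ ℓ) :
    x ^ (ℓ - 1) * (μ1 * (1 - ε1))
      + (∑ t ∈ Icc 1 (ℓ - 1), x ^ (t - 1) * y ^ (ℓ - 1 - t))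
          * (μ1 * (ε1 - ε12)) * (μ1 * (1 - ε1))
      + (∑ d ∈ Icc 2 ℓ, ∑ t ∈ Icc 1 (ℓ - d),
          x ^ (t - 1) * y ^ (ℓ - d - t) * (μ1 * (ε1 - ε12))^2
            * z ^ (d - 2) * (μ3 * (1 - ε1)))
      + (∑ d ∈ Icc 2 ℓ,
          x ^ (ℓ - d) * (μ1 * (ε1 - ε12)) * z ^ (d - 2) * (μ3 * (1 - ε1)))
      = δ * x ^ (ℓ - 1) + β * y ^ (ℓ - 1) :=
  interdelivery_distribution_general μ1 μ2 μ3 ε1 ε12 x y z D δ β hx hy hz hD hδ hβ hDne ℓ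
end

section
/- Let μ1, μ2, μ3 > 0 with μ1 + μ2 + μ3 = 1 and 0 ≤ ε12 < ε1 < 1, and set x = μ1·ε12 + μ2 + μ3, y = μ1·ε1 + μ2 + μ3·ε1, z = μ1·ε12 + μ2 + μ3·ε1, D = μ3·(1−ε1) − μ1·(ε1−ε12), δ = μ1·(1−ε12) + μ1²·(ε1−ε12)·(1−ε12)/D, β = −μ1·(ε1−ε12)·(1−ε1)·(μ1+μ3)/D. Assume D ≠ 0 and δ/(1−x)² + β/(1−y)² ≠ 0. Then the per-user average age E[I1²]/(2·E[I1]) + E[D1] − 1/2, with E[I1] = δ/(1−x)² + β/(1−y)², E[I1²] = δ·(1+x)/(1−x)³ + β·(1+y)/(1−y)³ and E[D1] = 1 + μ3·(ε1−ε12)/((μ1+μ3)·(1−ε12)·(1−z)), equals ( μ3·(1−ε1)/(μ1·(1−ε12))² − μ1·(ε1−ε12)/((μ1+μ3)·(1−ε1))² ) / ( μ3·(1−ε1)/(μ1·(1−ε12)) − μ1·(ε1−ε12)/((μ1+μ3)·(1−ε1)) ) + μ3·(ε1−ε12) / ( (μ1+μ3)·(1−ε12)·(μ1·(1−ε12) +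 μ3·(1−ε1)) ). (This is the per-user bracket in the closed-form expected weighted sum age of information of the stationary randomized policy.) -/
/-!
Writing `a = 1 - x`, `b = 1 - y`, the identity `(1 + x)/(1 - x)³ = 2/(1 - x)³ - 1/(1 - x)²` gives
`E[I1²] = 2 (δ/a³ + β/b³) - E[I1]`, so the bracket equals `(δ/a³ + β/b³)/(δ/a² + β/b²) + E[D1] - 1`.
With `c = μ3 (1 - ε1)` and `e = μ1 (ε1 - ε12)` one has `D = c - e`, `δ = a c / D` and `β = -e b / D`,
so the common factor `1/D` cancels from that ratio, leaving `(c/a² - e/b²)/(c/a - e/b)`.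
-/

lemma geom_mixture_second_moment_eq {δ β x y : ℝ} (hx : 1 - x ≠ 0) (hy : 1 - y ≠ 0) :
    δ * (1 + x) / (1 - x) ^ 3 + β * (1 + y) / (1 - y) ^ 3
      = 2 * (δ / (1 - x) ^ 3 + β / (1 - y) ^ 3) - (δ / (1 - x) ^ 2 + β / (1 - y) ^ 2) := by
  field_simp
  ring

lemma geom_mixture_second_moment_div_first {δ β x y : ℝ} (hx : 1 - x ≠ 0) (hy : 1 - y ≠ 0)
    (hI : δ / (1 - x) ^ 2 + β / (1 - y) ^ 2 ≠ 0) :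
    (δ * (1 + x) / (1 - x) ^ 3 + β * (1 + y) / (1 - y) ^ 3)
        / (2 * (δ / (1 - x) ^ 2 + β / (1 - y) ^ 2))
      = (δ / (1 - x) ^ 3 + β / (1 - y) ^ 3) / (δ / (1 - x) ^ 2 + β / (1 - y) ^ 2) - 1 / 2 := by
  rw [geom_mixture_second_moment_eq hx hy]
  generalize δ / (1 - x) ^ 2 + β / (1 - y) ^ 2 = I at hI ⊢
  field_simp

lemma div_mixture_ratio_cancel {a b c e D : ℝ} (ha : a ≠ 0) (hb : b ≠ 0) (hD : D ≠ 0) :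
    (a * c / D / a ^ 3 + -(e * b) / D / b ^ 3) / (a * c / D / a ^ 2 + -(e * b) / D / b ^ 2)
      = (c / a ^ 2 - e / b ^ 2) / (c / a - e / b) := by
  have hnum : a * c / D / a ^ 3 + -(e * b) / D / b ^ 3 = (c / a ^ 2 - e / b ^ 2) / D := by
    field_simp
    ring
  have hden : a * c / D / a ^ 2 + -(e * b) / D / b ^ 2 = (c / a - e / b) / D := by
    field_simp
    ring
  rw [hnum, hden, div_div_div_cancel_right₀ hD]

theorem per_user_average_age_closed_form_general
    (μ1 μ2 μ3 ε1 ε12 : ℝ)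
    (hμ1 : 0 < μ1) (hμ3 : 0 < μ3) (hμ : μ1 + μ2 + μ3 = 1)
    (h121 : ε12 < ε1) (h1 : ε1 < 1)
    (x y z D δ β EI EI2 ED : ℝ)
    (hx : x = μ1 * ε12 + μ2 + μ3)
    (hy : y = μ1 * ε1 + μ2 + μ3 * ε1)
    (hz : z = μ1 * ε12 + μ2 + μ3 * ε1)
    (hD : D = μ3 * (1 - ε1) - μ1 * (ε1 - ε12))
    (hδ : δ = μ1 * (1 - ε12) + μ1^2 * (ε1 - ε12) * (1 - ε12) / D)
    (hβ : β = -(μ1 * (ε1 - ε12) * (1 - ε1) * (μ1 + μ3)) / D)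
    (hDne : D ≠ 0)
    (hEI : EI = δ / (1 - x)^2 + β / (1 - y)^2)
    (hEI2 : EI2 = δ * (1 + x) / (1 - x)^3 + β * (1 + y) / (1 - y)^3)
    (hED : ED = 1 + μ3 * (ε1 - ε12) / ((μ1 + μ3) * (1 - ε12) * (1 - z)))
    (hEIne : EI ≠ 0) :
    EI2 / (2 * EI) + ED - 1/2
      = (μ3 * (1 - ε1) / (μ1 * (1 - ε12))^2
          - μ1 * (ε1 - ε12) / ((μ1 + μ3) * (1 - ε1))^2)
        / (μ3 * (1 - ε1) / (μ1 * (1 - ε12))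
          - μ1 * (ε1 - ε12) / ((μ1 + μ3) * (1 - ε1)))
        + μ3 * (ε1 - ε12)
          / ((μ1 + μ3) * (1 - ε12) * (μ1 * (1 - ε12) + μ3 * (1 - ε1))) := by
  have hx1 : 1 - x = μ1 * (1 - ε12) := by rw [hx]; linear_combination -hμ
  have hy1 : 1 - y = (μ1 + μ3) * (1 - ε1) := by rw [hy]; linear_combination -hμ
  have hz1 : 1 - z = μ1 * (1 - ε12) + μ3 * (1 - ε1) := by rw [hz]; linear_combination -hμ
  have ha : μ1 * (1 - ε12) ≠ 0 := mul_ne_zero hμ1.ne' (by linarith)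
  have hb : (μ1 + μ3) * (1 - ε1) ≠ 0 := mul_ne_zero (by linarith) (by linarith)
  have hδ' : δ = μ1 * (1 - ε12) * (μ3 * (1 - ε1)) / D := by
    rw [hδ, eq_div_iff hDne, add_mul, div_mul_cancel₀ _ hDne, hD]
    ring
  have hβ' : β = -(μ1 * (ε1 - ε12) * ((μ1 + μ3) * (1 - ε1))) / D := by
    rw [hβ]; ring
  subst hEI hEI2 hED
  rw [geom_mixture_second_moment_div_first (hx1 ▸ ha) (hy1 ▸ hb) hEIne, hx1, hy1, hz1, hδ', hβ',
    div_mixture_ratio_cancel ha hb hDne]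
  ring

/-- Per-user bracket in the closed-form EWSAoI of the stationary randomized
policy: E[I1²]/(2E[I1]) + E[D1] − 1/2 in closed form. -/
theorem per_user_average_age_closed_form
    (μ1 μ2 μ3 ε1 ε12 : ℝ)
    (hμ1 : 0 < μ1) (hμ2 : 0 < μ2) (hμ3 : 0 < μ3) (hμ : μ1 + μ2 + μ3 = 1)
    (h12 : 0 ≤ ε12) (h121 : ε12 < ε1) (h1 : ε1 < 1)
    (x y z D δ β EI EI2 ED : ℝ)
    (hx : x = μ1 * ε12 + μ2 + μ3)
    (hy : y = μ1 * ε1 + μ2 + μ3 * ε1)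
    (hz : z = μ1 * ε12 + μ2 + μ3 * ε1)
    (hD : D = μ3 * (1 - ε1) - μ1 * (ε1 - ε12))
    (hδ : δ = μ1 * (1 - ε12) + μ1^2 * (ε1 - ε12) * (1 - ε12) / D)
    (hβ : β = -(μ1 * (ε1 - ε12) * (1 - ε1) * (μ1 + μ3)) / D)
    (hDne : D ≠ 0)
    (hEI : EI = δ / (1 - x)^2 + β / (1 - y)^2)
    (hEI2 : EI2 = δ * (1 + x) / (1 - x)^3 + β * (1 + y) / (1 - y)^3)
    (hED : ED = 1 + μ3 * (ε1 - ε12) / ((μ1 + μ3) * (1 - ε12) * (1 - z)))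
    (hEIne : EI ≠ 0) :
    EI2 / (2 * EI) + ED - 1/2
      = (μ3 * (1 - ε1) / (μ1 * (1 - ε12))^2
          - μ1 * (ε1 - ε12) / ((μ1 + μ3) * (1 - ε1))^2)
        / (μ3 * (1 - ε1) / (μ1 * (1 - ε12))
          - μ1 * (ε1 - ε12) / ((μ1 + μ3) * (1 - ε1)))
        + μ3 * (ε1 - ε12)
          / ((μ1 + μ3) * (1 - ε12) * (μ1 * (1 - ε12) + μ3 * (1 - ε1))) :=
  per_user_average_age_closed_form_general μ1 μ2 μ3 ε1 ε12 hμ1 hμ3 hμ h121 h1 x y z D δ β EI EI2 ED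
    hx hy hz hD hδ hβ hDne hEI hEI2 hED hEIne
end

section
/- Let 0 ≤ ε12 < ε < 1 with ε12 − 2ε + 1 ≥ 0, and let α > 0. Define, for μ ∈ (0, 1/2], f(μ) = (α/((1−ε12)·(1−μ))) · ( ( (1−ε)³·(1−2μ)·(1−μ)² − (1−ε12)²·(ε−ε12)·μ³ ) / ( ((1−2μ)·(1−ε)²·(1−μ) − μ²·(1−ε12)·(ε−ε12))·μ ) + (1−2μ)·(ε−ε12) / ( (2ε−1−ε12)·μ + 1−ε ) ), and N(μ) = (1−2μ)·(1−ε)²·(1−μ) − μ²·(1−ε12)·(ε−ε12). Then for every μ ∈ (0, 1/2) with N(μ) ≠ 0 one has f(1/2) < f(μ); i.e., the unique optimal coded randomized policy is μ* = 1/2, which never uses the coded action. -/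
/-!
Both the numerator and the denominator `N` of the first fraction in `f` are divisible by
`K = (1-ε)(1-2μ) - (ε-ε12)μ`, the cofactor of `N` being the second denominator
`D = (1-ε)(1-μ) + (ε-ε12)μ`. Cancelling `K` gives
`f(μ) = 2α + α (1-2μ) Q / ((1-ε12)(1-μ) μ D)` with `Q = (1-ε)²(1-μ)² + (ε-ε12) μ (ε(1-μ) + ε12 μ)`,
so `f(1/2) = 2α`, and on `(0, 1/2)` every factor of the correction term is positive.
-/

namespace CodedPolicy

def codedNumer (ε ε12 μ : ℝ) : ℝ :=
  (1 - ε)^3 * (1 - 2*μ) * (1 - μ)^2 - (1 - ε12)^2 * (ε - ε12) * μ^3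

def codedDenom (ε ε12 μ : ℝ) : ℝ :=
  (1 - 2*μ) * (1 - ε)^2 * (1 - μ) - μ^2 * (1 - ε12) * (ε - ε12)

def mixDenom (ε ε12 μ : ℝ) : ℝ :=
  (2*ε - 1 - ε12) * μ + 1 - ε

noncomputable def weightedAge (ε ε12 α μ : ℝ) : ℝ :=
  (α / ((1 - ε12) * (1 - μ)))
    * (codedNumer ε ε12 μ / (codedDenom ε ε12 μ * μ)
      + (1 - 2*μ) * (ε - ε12) / mixDenom ε ε12 μ)

def codedFactor (ε ε12 μ : ℝ) : ℝ :=
  (1 - ε) * (1 - 2*μ) - (ε - ε12) * μ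

def ageExcess (ε ε12 μ : ℝ) : ℝ :=
  (1 - ε)^2 * (1 - μ)^2 + (ε - ε12) * μ * (ε * (1 - μ) + ε12 * μ)

variable {ε ε12 μ : ℝ}

theorem mixDenom_eq (ε ε12 μ : ℝ) :
    mixDenom ε ε12 μ = (1 - ε) * (1 - μ) + (ε - ε12) * μ := by
  unfold mixDenom; ring

theorem mixDenom_pos (h : ε12 < ε) (h1 : ε < 1) (hμ0 : 0 < μ) (hμ1 : μ < 1) :
    0 < mixDenom ε ε12 μ := by
  rw [mixDenom_eq]
  have : 0 < (1 - ε) * (1 - μ) := mul_pos (by linarith) (by linarith)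
  have : 0 < (ε - ε12) * μ := mul_pos (by linarith) hμ0
  linarith

theorem codedDenom_eq_mul (ε ε12 μ : ℝ) :
    codedDenom ε ε12 μ = codedFactor ε ε12 μ * mixDenom ε ε12 μ := by
  unfold codedDenom codedFactor mixDenom; ring

theorem codedNumer_eq_mul (ε ε12 μ : ℝ) :
    codedNumer ε ε12 μ = codedFactor ε ε12 μ
      * ((1 - ε)^2 * (1 - μ)^2 + (ε - ε12) * μ * ((1 - ε) + (ε - ε12) * μ)) := by
  unfold codedNumer codedFactor; ring

theorem ageExcess_pos (h12 : 0 ≤ ε12) (h : ε12 ≤ ε) (h1 : ε < 1) (hμ0 : 0 ≤ μ) (hμ1 : μ < 1) :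
    0 < ageExcess ε ε12 μ := by
  have hlead : 0 < (1 - ε)^2 * (1 - μ)^2 := by
    have : 0 < 1 - ε := by linarith
    have : 0 < 1 - μ := by linarith
    positivity
  have hrest : 0 ≤ (ε - ε12) * μ * (ε * (1 - μ) + ε12 * μ) :=
    mul_nonneg (mul_nonneg (by linarith) hμ0)
      (add_nonneg (mul_nonneg (by linarith) (by linarith)) (mul_nonneg h12 hμ0))
  unfold ageExcess; linarith

theorem weightedAge_half (α : ℝ) (hd : ε ≠ ε12) (hb : ε12 ≠ 1) :
    weightedAge ε ε12 α (1/2) = 2 * α := by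
  have hd' : ε - ε12 ≠ 0 := sub_ne_zero.mpr hd
  have hb' : 1 - ε12 ≠ 0 := sub_ne_zero.mpr hb.symm
  unfold weightedAge codedNumer codedDenom mixDenom
  field_simp
  ring

theorem weightedAge_eq_add (α : ℝ) (hb : ε12 ≠ 1) (hμ0 : μ ≠ 0) (hμ1 : μ ≠ 1)
    (hN : codedDenom ε ε12 μ ≠ 0) :
    weightedAge ε ε12 α μ = 2 * α + α * (1 - 2*μ) * ageExcess ε ε12 μ
      / ((1 - ε12) * (1 - μ) * μ * mixDenom ε ε12 μ) := by
  rw [codedDenom_eq_mul] at hN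
  obtain ⟨hK, hD⟩ := mul_ne_zero_iff.mp hN
  have hb' : 1 - ε12 ≠ 0 := sub_ne_zero.mpr hb.symm
  have hμ1' : 1 - μ ≠ 0 := sub_ne_zero.mpr hμ1.symm
  unfold weightedAge
  rw [codedNumer_eq_mul, codedDenom_eq_mul, mul_assoc (codedFactor ε ε12 μ),
    mul_div_mul_left _ _ hK]
  have hDdef := mixDenom_eq ε ε12 μ
  -- with `D` kept atomic, `field_simp` recognises it as a nonzero denominator
  generalize mixDenom ε ε12 μ = D at hD hDdef ⊢
  field_simp
  subst hDdef
  unfold ageExcess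
  ring

end CodedPolicy

open CodedPolicy in
theorem uncoded_optimal_when_condition_holds_general
    (ε ε12 α : ℝ)
    (h12 : 0 ≤ ε12) (h121 : ε12 < ε) (h1 : ε < 1)
    (hα : 0 < α)
    (f N : ℝ → ℝ)
    (hf : ∀ μ : ℝ, f μ = (α / ((1 - ε12) * (1 - μ)))
          * (((1 - ε)^3 * (1 - 2*μ) * (1 - μ)^2
                - (1 - ε12)^2 * (ε - ε12) * μ^3)
              / (((1 - 2*μ) * (1 - ε)^2 * (1 - μ)
                    - μ^2 * (1 - ε12) * (ε - ε12)) * μ)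
            + (1 - 2*μ) * (ε - ε12) / ((2*ε - 1 - ε12) * μ + 1 - ε)))
    (hNdef : ∀ μ : ℝ, N μ = (1 - 2*μ) * (1 - ε)^2 * (1 - μ)
              - μ^2 * (1 - ε12) * (ε - ε12)) :
    ∀ μ : ℝ, 0 < μ → μ < 1/2 → N μ ≠ 0 → f (1/2) < f μ := by
  intro μ hμ0 hμh hN
  obtain rfl : f = weightedAge ε ε12 α := funext hf
  obtain rfl : N = codedDenom ε ε12 := funext hNdef
  rw [weightedAge_half α h121.ne' (by linarith),
    weightedAge_eq_add α (by linarith) hμ0.ne' (by linarith) hN, lt_add_iff_pos_right]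
  have hQ := ageExcess_pos h12 h121.le h1 hμ0.le (by linarith)
  have hD := mixDenom_pos h121 h1 hμ0 (by linarith)
  have : 0 < 1 - ε12 := by linarith
  have : 0 < 1 - μ := by linarith
  have : 0 < 1 - 2*μ := by linarith
  positivity

/-- In the symmetric case with ε12 − 2ε + 1 ≥ 0, μ* = 1/2 is the unique optimal
coded randomized policy: f(1/2) < f(μ) for all μ ∈ (0, 1/2) with N(μ) ≠ 0. -/
theorem uncoded_optimal_when_condition_holds
    (ε ε12 α : ℝ)
    (h12 : 0 ≤ ε12) (h121 : ε12 < ε) (h1 : ε < 1)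
    (hcond : 0 ≤ ε12 - 2*ε + 1) (hα : 0 < α)
    (f N : ℝ → ℝ)
    (hf : ∀ μ : ℝ, f μ = (α / ((1 - ε12) * (1 - μ)))
          * (((1 - ε)^3 * (1 - 2*μ) * (1 - μ)^2
                - (1 - ε12)^2 * (ε - ε12) * μ^3)
              / (((1 - 2*μ) * (1 - ε)^2 * (1 - μ)
                    - μ^2 * (1 - ε12) * (ε - ε12)) * μ)
            + (1 - 2*μ) * (ε - ε12) / ((2*ε - 1 - ε12) * μ + 1 - ε)))
    (hNdef : ∀ μ : ℝ, N μ = (1 - 2*μ) * (1 - ε)^2 * (1 - μ)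
              - μ^2 * (1 - ε12) * (ε - ε12)) :
    ∀ μ : ℝ, 0 < μ → μ < 1/2 → N μ ≠ 0 → f (1/2) < f μ :=
  uncoded_optimal_when_condition_holds_general ε ε12 α h12 h121 h1 hα f N hf hNdef
end
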